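/- arXiv:2307.05308 — 8 statements merged into one kernel-verified Lean document; each statement's English description precedes it below -/
import Mathlib

section
/- Let X be the set of 21 unordered pairs {i,j} of distinct elements of I = {1,...,7}. If η: X → ℂ satisfies η_{i,j∗k}·η_{j,k} = η_{j,k∗i}·η_{k,i} for all generative triplets i,j,k, then the support S = {t ∈ X : η(t) ≠ 0} is a nice set, i.e., whenever {i,j} ∈ S and {i∗j, k} ∈ S for a generating triplet {i,j,k}, the six pairs {i,j}, {j,k}, {k,i}, {i, j∗k}, {j, k∗i}, {k, i∗j} all belong to S. -/
abbrev GG : Type := ZMod 2 × ZMod 2 × ZMod 2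

/-- `X`: the 21 unordered pairs of distinct nonzero elements of `(ℤ/2)³`
(edges of the Fano plane). -/
def X : Finset (Sym2 GG) :=
  ((Finset.univ : Finset (GG × GG)).filter
    fun q => q.1 ≠ q.2 ∧ q.1 ≠ 0 ∧ q.2 ≠ 0).image fun q => s(q.1, q.2)

def Generative (a b c : GG) : Prop :=
  a ≠ 0 ∧ b ≠ 0 ∧ c ≠ 0 ∧ a ≠ b ∧ a ≠ c ∧ b ≠ c ∧ c ≠ a + b

def Pset (a b c : GG) : Finset (Sym2 GG) :=
  {s(a, b), s(b, c), s(c, a), s(a, b + c), s(b, c + a), s(c, a + b)}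

/-- `T ⊆ X` is nice: `{i,j} ∈ T` and `{i∗j, k} ∈ T` for a generative triplet `i,j,k`
implies `P_{i,j,k} ⊆ T`. -/
def IsNice (T : Finset (Sym2 GG)) : Prop :=
  T ⊆ X ∧ ∀ a b c : GG, Generative a b c →
    s(a, b) ∈ T → s(a + b, c) ∈ T → Pset a b c ⊆ T

lemma mem_X {x y : GG} (hxy : x ≠ y) (hx : x ≠ 0) (hy : y ≠ 0) : s(x, y) ∈ X := by
  simp only [X, Finset.mem_image, Finset.mem_filter, Finset.mem_univ, true_and]
  exact ⟨(x, y), ⟨hxy, hx, hy⟩, rfl⟩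

lemma GG_flip : ∀ a b c : GG, c ≠ a + b → a ≠ b + c := by decide

lemma GG_sum_ne : ∀ b c : GG, b ≠ c → b + c ≠ 0 := by decide

open Classical in
/-- The support of an admissible map `η` (satisfying
`η_{i,j∗k}·η_{j,k} = η_{j,k∗i}·η_{k,i}` for all generative triplets) is a nice set. -/
theorem support_isNice (η : Sym2 GG → ℂ)
    (hη : ∀ a b c : GG, Generative a b c →
      η s(a, b + c) * η s(b, c) = η s(b, c + a) * η s(c, a)) :
    IsNice (X.filter fun t => η t ≠ 0) := by
  constructor
  · exact Finset.filter_subset _ _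
  · intro a b c hg hab habc
    obtain ⟨ha, hb, hc, hab', hac, hbc, hcab⟩ := hg
    simp only [Finset.mem_filter] at hab habc
    have habc' : η s(c, a + b) ≠ 0 := by
      rw [Sym2.eq_swap]; exact habc.2
    have hPne : η s(c, a + b) * η s(a, b) ≠ 0 := mul_ne_zero habc' hab.2
    have habc2 : a ≠ b + c := GG_flip a b c hcab
    have hbca : b ≠ c + a := GG_flip b c a (GG_flip a b c hcab ∘ fun h => by
      rw [h, add_comm])
    -- Generative b c a
    have hg2 : Generative b c a := ⟨hb, hc, ha, hbc, hab'.symm, hac.symm, habc2⟩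
    have hg1 : Generative a b c := ⟨ha, hb, hc, hab', hac, hbc, hcab⟩
    have eq2 : η s(b, c + a) * η s(c, a) = η s(c, a + b) * η s(a, b) := hη b c a hg2
    have eq1 : η s(a, b + c) * η s(b, c) = η s(b, c + a) * η s(c, a) := hη a b c hg1
    have h2ne : η s(b, c + a) * η s(c, a) ≠ 0 := eq2 ▸ hPne
    have h1ne : η s(a, b + c) * η s(b, c) ≠ 0 := eq1 ▸ h2ne
    intro t ht
    simp only [Pset, Finset.mem_insert, Finset.mem_singleton] at ht
    rcases ht with h | h | h | h | h | h <;> subst h <;> rw [Finset.mem_filter]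
    · exact ⟨mem_X hab' ha hb, hab.2⟩
    · exact ⟨mem_X hbc hb hc, right_ne_zero_of_mul h1ne⟩
    · exact ⟨mem_X hac.symm hc ha, right_ne_zero_of_mul h2ne⟩
    · exact ⟨mem_X habc2 ha (GG_sum_ne b c hbc), left_ne_zero_of_mul h1ne⟩
    · exact ⟨mem_X hbca hb (GG_sum_ne c a hac.symm), left_ne_zero_of_mul h2ne⟩
    · exact ⟨mem_X hcab hc (GG_sum_ne a b hab'), habc'⟩
end

section
/- For every nice subset T of X, the indicator map η^T: X → ℂ with η^T(t) = 1 if t ∈ T and 0 otherwise satisfies η^T_{ijk} = η^T_{jki} for all generative triplets i,j,k (i.e., η^T is an admissible map with support T). -/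
lemma gg_add_self (x : GG) : x + x = 0 := by
  obtain ⟨x1, x2, x3⟩ := x
  have h2 : ∀ y : ZMod 2, y + y = 0 := by decide
  simp [Prod.ext_iff, h2]

lemma gen_cyc {a b c : GG} (h : Generative a b c) : Generative b c a := by
  obtain ⟨ha, hb, hc, hab, hac, hbc, habc⟩ := h
  refine ⟨hb, hc, ha, hbc, hab.symm, hac.symm, ?_⟩
  intro h'
  apply habc
  rw [h']
  rw [add_comm b c, add_assoc, gg_add_self, add_zero]

lemma key_step (T : Finset (Sym2 GG)) (hT : IsNice T) {a b c : GG}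
    (hg : Generative a b c) (h1 : s(a, b + c) ∈ T) (h2 : s(b, c) ∈ T) :
    s(b, c + a) ∈ T ∧ s(c, a) ∈ T := by
  have hsub := hT.2 b c a (gen_cyc hg) h2 (by rwa [Sym2.eq_swap])
  constructor
  · exact hsub (by simp [Pset])
  · exact hsub (by simp [Pset])

/-- For every (non-trivial) nice subset `T` of `X`, the indicator
map `η^T` has support exactly `T` and satisfies `η^T_{ijk} = η^T_{jki}` for all
generative triplets, i.e. it is an admissible map with support `T`. -/
theorem indicator_admissible (T : Finset (Sym2 GG)) (hT : IsNice T)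
    (hne : T ≠ ∅) (hnX : T ≠ X) :
    (∀ t : Sym2 GG, (if t ∈ T then (1 : ℂ) else 0) ≠ 0 ↔ t ∈ T) ∧
    ∀ a b c : GG, Generative a b c →
      (if s(a, b + c) ∈ T then (1 : ℂ) else 0) * (if s(b, c) ∈ T then (1 : ℂ) else 0) =
      (if s(b, c + a) ∈ T then (1 : ℂ) else 0) * (if s(c, a) ∈ T then (1 : ℂ) else 0) := by
  constructor
  · intro t
    by_cases h : t ∈ T <;> simp [h]
  · intro a b c hg
    have fwd : s(a, b + c) ∈ T → s(b, c) ∈ T → s(b, c + a) ∈ T ∧ s(c, a) ∈ T :=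
      fun h1 h2 => key_step T hT hg h1 h2
    have bwd : s(b, c + a) ∈ T → s(c, a) ∈ T → s(a, b + c) ∈ T ∧ s(b, c) ∈ T := by
      intro h1 h2
      obtain ⟨h3, h4⟩ := key_step T hT (gen_cyc hg) h1 h2
      exact key_step T hT (gen_cyc (gen_cyc hg)) h3 h4
    by_cases h1 : s(a, b + c) ∈ T <;> by_cases h2 : s(b, c) ∈ T <;>
      by_cases h3 : s(b, c + a) ∈ T <;> by_cases h4 : s(c, a) ∈ T <;>
      simp_all
end

section
/- Let T be a nice subset of X that contains no set of the form P_{i,j,k} for any generating triplet. If i, j, k ∈ I satisfy {i,j} ∈ T and {i∗j, k} ∈ T, then k = i or k = j. -/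
lemma memX (T : Finset (Sym2 GG)) (hTX : T ⊆ X) {a b : GG}
    (h : s(a, b) ∈ T) : a ≠ b ∧ a ≠ 0 ∧ b ≠ 0 := by
  have := hTX h
  simp only [X, Finset.mem_image, Finset.mem_filter] at this
  obtain ⟨q, ⟨_, h1, h2, h3⟩, heq⟩ := this
  rw [Sym2.eq_iff] at heq
  rcases heq with ⟨e1, e2⟩ | ⟨e1, e2⟩ <;> subst e1 <;> subst e2
  · exact ⟨h1, h2, h3⟩
  · exact ⟨fun e => h1 e.symm, h3, h2⟩

/-- If a nice set `T` contains no `P_{a,b,c}` and `{i,j} ∈ T`,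
`{i∗j, k} ∈ T`, then `k = i` or `k = j`. -/
theorem vacuous_nice (T : Finset (Sym2 GG)) (hT : IsNice T)
    (hP : ∀ a b c : GG, Generative a b c → ¬ Pset a b c ⊆ T)
    (i j k : GG) (hi : i ≠ 0) (hj : j ≠ 0) (hk : k ≠ 0)
    (hij : s(i, j) ∈ T) (hjk : s(i + j, k) ∈ T) :
    k = i ∨ k = j := by
  by_contra h
  push_neg at h
  have hne : i ≠ j := (memX T hT.1 hij).1
  have hk' : i + j ≠ k := (memX T hT.1 hjk).1
  exact hP i j k ⟨hi, hj, hk, hne, fun e => h.1 e.symm, fun e => h.2 e.symm,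
    fun e => hk' e.symm⟩ (hT.2 i j k ⟨hi, hj, hk, hne, fun e => h.1 e.symm,
    fun e => h.2 e.symm, fun e => hk' e.symm⟩ hij hjk)
end

section
/- Let T be a nice subset of X containing X_L for some line L = {i,j,i∗j}, and suppose T contains no P_{i',j',k'} for any generating triplet. Then T = X_L. -/
def XL (i j : GG) : Finset (Sym2 GG) := {s(i, j), s(i, i + j), s(j, i + j)}

instance (a b c : GG) : Decidable (Generative a b c) := by
  unfold Generative; infer_instance

/-- Explicit witness triple used to produce a `Pset` from an extra edge. -/
def wit (i j a b : GG) : GG × GG × GG :=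
  if a = i then (j, i + j, b)
  else if a = j then (i, i + j, b)
  else if a = i + j then (i, j, b)
  else if b = i then (j, i + j, a)
  else if b = j then (i, i + j, a)
  else if b = i + j then (i, j, a)
  else if a + b = i then (a, b, j) else (a, b, i)

set_option synthInstance.maxSize 2000 in
set_option maxHeartbeats 2000000 in
lemma key : ∀ i j a b : GG, i ≠ 0 → j ≠ 0 → i ≠ j → a ≠ 0 → b ≠ 0 → a ≠ b →
    s(a, b) ∉ XL i j →
    Generative (wit i j a b).1 (wit i j a b).2.1 (wit i j a b).2.2 ∧
      (s((wit i j a b).1, (wit i j a b).2.1) ∈ XL i j ∨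
        s((wit i j a b).1, (wit i j a b).2.1) = s(a, b)) ∧
      (s((wit i j a b).1 + (wit i j a b).2.1, (wit i j a b).2.2) ∈ XL i j ∨
        s((wit i j a b).1 + (wit i j a b).2.1, (wit i j a b).2.2) = s(a, b)) := by
  decide

/-- A nice set containing `X_L` for a line `L` and containing
no `P_{a,b,c}` equals `X_L`. -/
theorem nice_containing_line (i j : GG) (hi : i ≠ 0) (hj : j ≠ 0) (hij : i ≠ j)
    (T : Finset (Sym2 GG)) (hT : IsNice T) (hsub : XL i j ⊆ T)
    (hP : ∀ a b c : GG, Generative a b c → ¬ Pset a b c ⊆ T) :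
    T = XL i j := by
  refine Finset.Subset.antisymm ?_ hsub
  intro e heT
  by_contra heXL
  have heX : e ∈ X := hT.1 heT
  simp only [X, Finset.mem_image, Finset.mem_filter] at heX
  obtain ⟨⟨a, b⟩, ⟨-, hab, ha, hb⟩, rfl⟩ := heX
  obtain ⟨hgen, h1, h2⟩ := key i j a b hi hj hij ha hb hab heXL
  have hsab : s(a, b) ∈ T := heT
  have m1 : s((wit i j a b).1, (wit i j a b).2.1) ∈ T := by
    rcases h1 with h | h
    · exact hsub h
    · rw [h]; exact hsab
  have m2 : s((wit i j a b).1 + (wit i j a b).2.1, (wit i j a b).2.2) ∈ T := by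
    rcases h2 with h | h
    · exact hsub h
    · rw [h]; exact hsab
  exact hP _ _ _ hgen (hT.2 _ _ _ hgen m1 m2)
end

section
/- If T is a nice subset of X strictly containing X \ X_{L_{12}}^C (the set of pairs meeting the line {1,2,1∗2}), then T = X. -/
def XLC (i j : GG) : Finset (Sym2 GG) :=
  X.filter fun p => ∀ x ∈ p, x ≠ i ∧ x ≠ j ∧ x ≠ i + j

def ee1 : GG := (1, 0, 0)
def ee2 : GG := (0, 1, 0)

def vv1 : GG := (0,0,1)
def vv2 : GG := (1,0,1)
def vv3 : GG := (0,1,1)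
def vv4 : GG := (1,1,1)

lemma XLC_eq : XLC ee1 ee2 =
    {s(vv1,vv2), s(vv1,vv3), s(vv1,vv4), s(vv2,vv3), s(vv2,vv4), s(vv3,vv4)} := by decide

/-- From one off-line pair `s(a,b)` in `T`, get all six off-line pairs. -/
lemma all_of_one (T : Finset (Sym2 GG)) (hT : IsNice T)
    (hX : X \ XLC ee1 ee2 ⊆ T) (a b c d : GG)
    (g1 : Generative a b c) (m1 : s(a+b,c) ∈ X \ XLC ee1 ee2)
    (g2 : Generative a b d) (m2 : s(a+b,d) ∈ X \ XLC ee1 ee2)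
    (g3 : Generative a c d) (m3 : s(a+c,d) ∈ X \ XLC ee1 ee2)
    (hab : s(a,b) ∈ T) :
    s(a,b) ∈ T ∧ s(a,c) ∈ T ∧ s(a,d) ∈ T ∧ s(b,c) ∈ T ∧ s(b,d) ∈ T ∧ s(c,d) ∈ T := by
  have P1 := hT.2 a b c g1 hab (hX m1)
  have P2 := hT.2 a b d g2 hab (hX m2)
  have hac : s(a,c) ∈ T := by
    have : s(c,a) ∈ Pset a b c := by simp [Pset]
    simpa [Sym2.eq_swap] using P1 this
  have P3 := hT.2 a c d g3 hac (hX m3)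
  refine ⟨hab, hac, ?_, ?_, ?_, ?_⟩
  · have : s(d,a) ∈ Pset a b d := by simp [Pset]
    simpa [Sym2.eq_swap] using P2 this
  · exact P1 (by simp [Pset])
  · exact P2 (by simp [Pset])
  · exact P3 (by simp [Pset])

/-- A nice set strictly containing `X \ X_{L_{12}}^C` (the set of
edges meeting the line through `g₁ = (1,0,0)` and `g₂ = (0,1,0)`) is all of `X`. -/
theorem nice_above_complement (T : Finset (Sym2 GG)) (hT : IsNice T)
    (hsub : X \ XLC ee1 ee2 ⊂ T) : T = X := by
  have hle : X \ XLC ee1 ee2 ⊆ T := hsub.1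
  obtain ⟨p, hpT, hpn⟩ := Finset.exists_of_ssubset hsub
  have hpX : p ∈ XLC ee1 ee2 := by
    have := hT.1 hpT
    simp only [Finset.mem_sdiff, not_and, not_not] at hpn
    exact hpn this
  have hall : s(vv1,vv2) ∈ T ∧ s(vv1,vv3) ∈ T ∧ s(vv1,vv4) ∈ T ∧
      s(vv2,vv3) ∈ T ∧ s(vv2,vv4) ∈ T ∧ s(vv3,vv4) ∈ T := by
    rw [XLC_eq] at hpX
    simp only [Finset.mem_insert, Finset.mem_singleton] at hpX
    rcases hpX with h|h|h|h|h|h <;> subst h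
    · obtain ⟨h1,h2,h3,h4,h5,h6⟩ := all_of_one T hT hle vv1 vv2 vv3 vv4
        (by decide) (by decide) (by decide) (by decide) (by decide) (by decide) hpT
      exact ⟨h1,h2,h3,h4,h5,h6⟩
    · obtain ⟨h1,h2,h3,h4,h5,h6⟩ := all_of_one T hT hle vv1 vv3 vv2 vv4
        (by decide) (by decide) (by decide) (by decide) (by decide) (by decide) hpT
      exact ⟨h2, h1, h3, by rwa [Sym2.eq_swap], h6, h5⟩
    · obtain ⟨h1,h2,h3,h4,h5,h6⟩ := all_of_one T hT hle vv1 vv4 vv2 vv3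
        (by decide) (by decide) (by decide) (by decide) (by decide) (by decide) hpT
      exact ⟨h2, h3, h1, h6, by rwa [Sym2.eq_swap], by rwa [Sym2.eq_swap]⟩
    · obtain ⟨h1,h2,h3,h4,h5,h6⟩ := all_of_one T hT hle vv2 vv3 vv1 vv4
        (by decide) (by decide) (by decide) (by decide) (by decide) (by decide) hpT
      exact ⟨by rwa [Sym2.eq_swap], by rwa [Sym2.eq_swap], h6, h1, h3, h5⟩
    · obtain ⟨h1,h2,h3,h4,h5,h6⟩ := all_of_one T hT hle vv2 vv4 vv1 vv3
        (by decide) (by decide) (by decide) (by decide) (by decide) (by decide) hpT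
      exact ⟨by rwa [Sym2.eq_swap], h6, by rwa [Sym2.eq_swap], h3, h1, by rwa [Sym2.eq_swap]⟩
    · obtain ⟨h1,h2,h3,h4,h5,h6⟩ := all_of_one T hT hle vv3 vv4 vv1 vv2
        (by decide) (by decide) (by decide) (by decide) (by decide) (by decide) hpT
      exact ⟨h6, by rwa [Sym2.eq_swap], by rwa [Sym2.eq_swap], by rwa [Sym2.eq_swap],
        by rwa [Sym2.eq_swap], h1⟩
  obtain ⟨h1,h2,h3,h4,h5,h6⟩ := hall
  refine Finset.Subset.antisymm hT.1 fun q hq => ?_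
  by_cases hq' : q ∈ XLC ee1 ee2
  · rw [XLC_eq] at hq'
    simp only [Finset.mem_insert, Finset.mem_singleton] at hq'
    rcases hq' with h|h|h|h|h|h <;> subst h <;> assumption
  · exact hle (Finset.mem_sdiff.mpr ⟨hq, hq'⟩)
end

section
/- Every nice subset T of X which contains no P_{i,j,k} (for generating triplets {i,j,k}) has at most 6 elements. -/
set_option synthInstance.maxSize 2000
set_option maxRecDepth 10000
set_option maxHeartbeats 4000000


def L : List (Sym2 GG) := [s((0,0,1), (0,1,0)), s((0,0,1), (0,1,1)), s((0,0,1), (1,0,0)), s((0,0,1), (1,0,1)), s((0,0,1), (1,1,0)), s((0,0,1), (1,1,1)), s((0,1,0), (0,1,1)), s((0,1,0), (1,0,0)), s((0,1,0), (1,0,1)), s((0,1,0), (1,1,0)), s((0,1,0), (1,1,1)), s((0,1,1), (1,0,0)), s((0,1,1), (1,0,1)), s((0,1,1), (1,1,0)), s((0,1,1), (1,1,1)), s((1,0,0), (1,0,1)), s((1,0,0), (1,1,0)), s((1,0,0), (1,1,1)), s((1,0,1), (1,1,0)), s((1,0,1), (1,1,1)), s((1,1,0), (1,1,1))]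

def A : Nat := 40616188976943314285072243783903368910119984208386819658603451153072227223316670719351258178522605277831628774264220395767887872

def pc (i j : Nat) : Bool := A.testBit (21*i+j) || A.testBit (21*j+i)

def Confl (e f : Sym2 GG) : Prop :=
  ∃ a b c : GG, Generative a b c ∧ e = s(a, b) ∧ f = s(a + b, c)

instance (e f : Sym2 GG) : Decidable (Confl e f) := by unfold Confl Generative; infer_instance

set_option maxRecDepth 10000 in
theorem hA : ∀ i < 21, ∀ j < 21, A.testBit (21*i+j) = true →
    Confl (L.getD i default) (L.getD j default) := by decide

set_option synthInstance.maxSize 1000 in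
set_option maxRecDepth 10000 in
set_option maxHeartbeats 4000000 in
def keyB : Bool :=
  (List.range 21).all fun g =>
  (List.range g).all fun f => pc f g ||
  ((List.range f).all fun e => pc e f || pc e g ||
  ((List.range e).all fun d => pc d e || pc d f || pc d g ||
  ((List.range d).all fun c => pc c d || pc c e || pc c f || pc c g ||
  ((List.range c).all fun b => pc b c || pc b d || pc b e || pc b f || pc b g ||
  ((List.range b).all fun a => pc a b || pc a c || pc a d || pc a e || pc a f || pc a g)))))

theorem keyB_true : keyB = true := by decide

theorem key_s13 : ∀ g < 21, ∀ f < g,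
  pc f g = true ∨ ∀ e < f,
  pc e f = true ∨ pc e g = true ∨ ∀ d < e,
  pc d e = true ∨ pc d f = true ∨ pc d g = true ∨ ∀ c < d,
  pc c d = true ∨ pc c e = true ∨ pc c f = true ∨ pc c g = true ∨ ∀ b < c,
  pc b c = true ∨ pc b d = true ∨ pc b e = true ∨ pc b f = true ∨ pc b g = true ∨ ∀ a < b,
  pc a b = true ∨ pc a c = true ∨ pc a d = true ∨ pc a e = true ∨ pc a f = true ∨ pc a g = true
  := by
  have h := keyB_true
  simp only [keyB, List.all_eq_true, List.mem_range, Bool.or_eq_true, or_assoc] at h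
  exact h

theorem X_subset_L : ∀ e ∈ X, e ∈ L := by decide

theorem length_L : L.length = 21 := rfl


/-- A nice set containing no `P_{a,b,c}` has at most 6 elements. -/
theorem nice_no_P_card_le_six (T : Finset (Sym2 GG)) (hT : IsNice T)
    (hP : ∀ a b c : GG, Generative a b c → ¬ Pset a b c ⊆ T) :
    T.card ≤ 6 := by
  by_contra hcard
  push_neg at hcard
  obtain ⟨S, hST, hS7⟩ := Finset.exists_subset_card_eq (s := T) (n := 7) (by omega)
  have hSL : ∀ e ∈ S, e ∈ L := fun e he => X_subset_L e (hT.1 (hST he))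
  have hC : ∀ e f : Sym2 GG, e ∈ T → f ∈ T → ¬ Confl e f := by
    rintro e f he hf ⟨a, b, c, hg, rfl, rfl⟩
    exact hP a b c hg (hT.2 a b c hg he hf)
  set idx : Sym2 GG → ℕ := fun e => L.idxOf e with hidx
  have hget : ∀ e ∈ S, L.getD (idx e) default = e := by
    intro e he
    have hl : idx e < L.length := List.idxOf_lt_length_iff.2 (hSL e he)
    rw [List.getD_eq_getElem _ _ hl]
    exact List.getElem_idxOf hl
  have hlt21 : ∀ e ∈ S, idx e < 21 :=
    fun e he => length_L ▸ List.idxOf_lt_length_iff.2 (hSL e he)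
  set I : Finset ℕ := S.image idx with hI
  have hinj : Set.InjOn idx S := by
    intro e1 h1 e2 h2 heq
    rw [← hget e1 h1, heq, hget e2 h2]
  have hI7 : I.card = 7 := by rw [hI, Finset.card_image_of_injOn hinj, hS7]
  set σ := I.orderIsoOfFin hI7 with hσ
  have hmem : ∀ k : Fin 7, ((σ k : ℕ)) ∈ I := fun k => (σ k).2
  have hlt : ∀ k : Fin 7, ((σ k : ℕ)) < 21 := by
    intro k
    obtain ⟨e, heS, heq⟩ := Finset.mem_image.1 (hmem k)
    exact heq ▸ hlt21 e heS
  have hmono : ∀ k l : Fin 7, k < l → ((σ k : ℕ)) < ((σ l : ℕ)) :=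
    fun k l h => Subtype.coe_lt_coe.2 (σ.strictMono h)
  have main : ∀ i j : ℕ, i ∈ I → j ∈ I → pc i j = true → False := by
    intro i j hi hj hpc
    obtain ⟨e, heS, rfl⟩ := Finset.mem_image.1 hi
    obtain ⟨f, hfS, rfl⟩ := Finset.mem_image.1 hj
    simp only [pc, Bool.or_eq_true] at hpc
    rcases hpc with h | h
    · have := hA _ (hlt21 e heS) _ (hlt21 f hfS) h
      rw [hget e heS, hget f hfS] at this
      exact hC e f (hST heS) (hST hfS) this
    · have := hA _ (hlt21 f hfS) _ (hlt21 e heS) h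
      rw [hget f hfS, hget e heS] at this
      exact hC f e (hST hfS) (hST heS) this
  rcases key_s13 _ (hlt 6) _ (hmono 5 6 (by decide)) with h | hk
  · exact main _ _ (hmem 5) (hmem 6) h
  rcases hk _ (hmono 4 5 (by decide)) with h | h | hk
  · exact main _ _ (hmem 4) (hmem 5) h
  · exact main _ _ (hmem 4) (hmem 6) h
  rcases hk _ (hmono 3 4 (by decide)) with h | h | h | hk
  · exact main _ _ (hmem 3) (hmem 4) h
  · exact main _ _ (hmem 3) (hmem 5) h
  · exact main _ _ (hmem 3) (hmem 6) h
  rcases hk _ (hmono 2 3 (by decide)) with h | h | h | h | hk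
  · exact main _ _ (hmem 2) (hmem 3) h
  · exact main _ _ (hmem 2) (hmem 4) h
  · exact main _ _ (hmem 2) (hmem 5) h
  · exact main _ _ (hmem 2) (hmem 6) h
  rcases hk _ (hmono 1 2 (by decide)) with h | h | h | h | h | hk
  · exact main _ _ (hmem 1) (hmem 2) h
  · exact main _ _ (hmem 1) (hmem 3) h
  · exact main _ _ (hmem 1) (hmem 4) h
  · exact main _ _ (hmem 1) (hmem 5) h
  · exact main _ _ (hmem 1) (hmem 6) h
  rcases hk _ (hmono 0 1 (by decide)) with h | h | h | h | h | h
  · exact main _ _ (hmem 0) (hmem 1) h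
  · exact main _ _ (hmem 0) (hmem 2) h
  · exact main _ _ (hmem 0) (hmem 3) h
  · exact main _ _ (hmem 0) (hmem 4) h
  · exact main _ _ (hmem 0) (hmem 5) h
  · exact main _ _ (hmem 0) (hmem 6) h
end

section
/- Let L be the Lie algebra sl(2,ℂ) ⊕ sl(2,ℂ) with standard bases {x_i, e_i, f_i} of the i-th summand (i = 1, 2), graded by H = (Z/2)^2 with L_{(0,0)} = span{x_1, x_2}, L_{(1,0)} = span{e_1, f_1}, L_{(1,1)} = span{e_2, f_2}, L_{(0,1)} = 0. Define ε' on H × H by ε'((0,0),(1,0)) = ε'((1,0),(0,0)) = -1 and ε' = 1 otherwise. Then the modified bracket [x,y]' = ε'(g,h)[x,y] for x ∈ L_g, y ∈ L_h makes L into a Lie algebra that is isomorphic to L via a grading-preserving isomorphism, but there is no isomorphism φ: L → L' acting as a nonzero scalar on each homogeneous component. -/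
/-!
Contracting by `ε'` only flips the sign of the brackets between `L₍₀,₀₎` and `L₍₁,₀₎`. The linear
map fixing `x₁, x₂, e₂, f₂` and rotating `e₁ ↦ f₁ ↦ -e₁` exchanges the `x₁`-weights `±2` of `e₁` and
`f₁` while preserving `⁅e₁, f₁⁆ = x₁`, so it carries the contracted bracket to the original one and
preserves every homogeneous component; in particular the contracted bracket is a Lie bracket.

A map acting on each `L_g` by a scalar `c_g` must satisfy `c_k = ε'(g,h) c_g c_h` whenever
`0 ≠ ⁅x, y⁆ ∈ L_k` for some `x ∈ L_g`, `y ∈ L_h`. The pairs `(x₁, e₁)` and `(x₂, e₂)` give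
`c₍₀,₀₎ = -1` and `c₍₀,₀₎ = 1`.
-/

open Function

section Intertwining

variable {M L F : Type*} [AddZeroClass M] [LieRing L] [FunLike F M L]
  [AddMonoidHomClass F M L] {φ : F} {B : M → M → M}

theorem self_eq_zero_of_map_eq_lie (hφ : Injective φ) (hB : ∀ x y, φ (B x y) = ⁅φ x, φ y⁆)
    (x : M) : B x x = 0 :=
  hφ <| by rw [hB, lie_self, map_zero]

theorem jacobi_of_map_eq_lie (hφ : Injective φ) (hB : ∀ x y, φ (B x y) = ⁅φ x, φ y⁆)
    (x y z : M) : B x (B y z) + B y (B z x) + B z (B x y) = 0 :=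
  hφ <| by simpa only [map_add, hB, map_zero] using lie_jacobi (φ x) (φ y) (φ z)

end Intertwining

theorem eq_mul_mul_of_map_lie_eq {ι K L : Type*} [Field K] [LieRing L] [LieAlgebra K L]
    {ℒ : ι → Submodule K L} {ε : ι → ι → K} {B : L → L → L}
    (hB : ∀ g h, ∀ x ∈ ℒ g, ∀ y ∈ ℒ h, B x y = ε g h • ⁅x, y⁆)
    {φ : L → L} {c : ι → K} (hc : ∀ g, ∀ x ∈ ℒ g, φ x = c g • x)
    (hφ : ∀ x y, φ ⁅x, y⁆ = B (φ x) (φ y)) {g h k : ι} {x y : L} (hx : x ∈ ℒ g)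
    (hy : y ∈ ℒ h) (hxy : ⁅x, y⁆ ∈ ℒ k) (hxy₀ : ⁅x, y⁆ ≠ 0) :
    c k = ε g h * c g * c h := by
  apply smul_left_injective K hxy₀
  calc c k • ⁅x, y⁆ = φ ⁅x, y⁆ := (hc k _ hxy).symm
    _ = ε g h • ⁅c g • x, c h • y⁆ := by
      rw [hφ, hc g x hx, hc h y hy,
        hB g h _ (Submodule.smul_mem _ _ hx) _ (Submodule.smul_mem _ _ hy)]
    _ = (ε g h * c g * c h) • ⁅x, y⁆ := by rw [smul_lie, lie_smul, smul_smul, smul_smul]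

section Sl2Sum

variable (K : Type*) {L : Type*} [CommRing K] [LieRing L] [LieAlgebra K L]

structure IsCommutingSl2Triples (x₁ x₂ e₁ f₁ e₂ f₂ : L) : Prop where
  lie_x₁_e₁ : ⁅x₁, e₁⁆ = (2 : K) • e₁
  lie_x₁_f₁ : ⁅x₁, f₁⁆ = (-2 : K) • f₁
  lie_e₁_f₁ : ⁅e₁, f₁⁆ = x₁
  lie_x₂_e₂ : ⁅x₂, e₂⁆ = (2 : K) • e₂
  lie_x₂_f₂ : ⁅x₂, f₂⁆ = (-2 : K) • f₂
  lie_e₂_f₂ : ⁅e₂, f₂⁆ = x₂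
  lie_x₁_x₂ : ⁅x₁, x₂⁆ = 0
  lie_x₁_e₂ : ⁅x₁, e₂⁆ = 0
  lie_x₁_f₂ : ⁅x₁, f₂⁆ = 0
  lie_e₁_x₂ : ⁅e₁, x₂⁆ = 0
  lie_e₁_e₂ : ⁅e₁, e₂⁆ = 0
  lie_e₁_f₂ : ⁅e₁, f₂⁆ = 0
  lie_f₁_x₂ : ⁅f₁, x₂⁆ = 0
  lie_f₁_e₂ : ⁅f₁, e₂⁆ = 0
  lie_f₁_f₂ : ⁅f₁, f₂⁆ = 0

def sl2SumDegree : Fin 6 → ZMod 2 × ZMod 2 := ![(0, 0), (0, 0), (1, 0), (1, 0), (1, 1), (1, 1)]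

def sl2SumContraction (g h : ZMod 2 × ZMod 2) : K :=
  if (g = (0, 0) ∧ h = (1, 0)) ∨ (g = (1, 0) ∧ h = (0, 0)) then -1 else 1

variable {K} {x₁ x₂ e₁ f₁ e₂ f₂ : L} (hli : LinearIndependent K ![x₁, x₂, e₁, f₁, e₂, f₂])
  (hsp : ⊤ ≤ Submodule.span K (Set.range ![x₁, x₂, e₁, f₁, e₂, f₂]))

noncomputable def quarterTurn : L ≃ₗ[K] L :=
  let b := Module.Basis.mk hli hsp
  b.equiv (b.unitsSMul ![1, 1, -1, 1, 1, 1]) (Equiv.swap 2 3)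

theorem quarterTurn_apply :
    quarterTurn hli hsp x₁ = x₁ ∧ quarterTurn hli hsp x₂ = x₂ ∧ quarterTurn hli hsp e₁ = f₁ ∧
      quarterTurn hli hsp f₁ = -e₁ ∧ quarterTurn hli hsp e₂ = e₂ ∧ quarterTurn hli hsp f₂ = f₂ := by
  have h (i : Fin 6) :
      quarterTurn hli hsp (![x₁, x₂, e₁, f₁, e₂, f₂] i) = ![x₁, x₂, f₁, -e₁, e₂, f₂] i := by
    rw [← Module.Basis.mk_apply hli hsp, quarterTurn, Module.Basis.equiv_apply,
      Module.Basis.unitsSMul_apply, Module.Basis.mk_apply]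
    fin_cases i <;> simp [Equiv.swap_apply_of_ne_of_ne]
  exact ⟨h 0, h 1, h 2, h 3, h 4, h 5⟩

theorem IsCommutingSl2Triples.quarterTurn_map_eq_lie
    (hrel : IsCommutingSl2Triples K x₁ x₂ e₁ f₁ e₂ f₂) {B : L →ₗ[K] L →ₗ[K] L}
    (hB : ∀ i j, B (![x₁, x₂, e₁, f₁, e₂, f₂] i) (![x₁, x₂, e₁, f₁, e₂, f₂] j) =
      sl2SumContraction K (sl2SumDegree i) (sl2SumDegree j) •
        ⁅![x₁, x₂, e₁, f₁, e₂, f₂] i, ![x₁, x₂, e₁, f₁, e₂, f₂] j⁆)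
    (x y : L) : quarterTurn hli hsp (B x y) = ⁅quarterTurn hli hsp x, quarterTurn hli hsp y⁆ := by
  have rev {a b c : L} (h : ⁅a, b⁆ = c) : ⁅b, a⁆ = -c := by rw [← lie_skew, h]
  obtain ⟨φx₁, φx₂, φe₁, φf₁, φe₂, φf₂⟩ := quarterTurn_apply hli hsp
  set φ := quarterTurn hli hsp
  obtain ⟨h1, h2, h3, h4, h5, h6, h7, h8, h9, h10, h11, h12, h13, h14, h15⟩ := hrel
  suffices B.compr₂ (φ : L →ₗ[K] L) =
      (LieModule.toEnd K L L : L →ₗ[K] L →ₗ[K] L).compl₁₂ φ φ from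
    LinearMap.congr_fun₂ this x y
  refine LinearMap.ext_basis (Module.Basis.mk hli hsp) (Module.Basis.mk hli hsp) fun i j => ?_
  simp only [Module.Basis.mk_apply, LinearMap.compr₂_apply, LinearMap.compl₁₂_apply,
    LieHom.coe_toLinearMap, LieModule.toEnd_apply_apply, LinearEquiv.coe_coe, hB, map_smul]
  fin_cases i <;> fin_cases j <;>
    simp [sl2SumContraction, sl2SumDegree, φx₁, φx₂, φe₁, φf₁, φe₂, φf₂, smul_smul,
      h1, h2, h3, h4, h5, h6, h7, h8, h9, h10, h11, h12, h13, h14, h15,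
      rev h1, rev h2, rev h3, rev h4, rev h5, rev h6, rev h7, rev h8, rev h9, rev h10,
      rev h11, rev h12, rev h13, rev h14, rev h15]

theorem map_quarterTurn_span :
    (Submodule.span K {x₁, x₂}).map (quarterTurn hli hsp : L →ₗ[K] L) = Submodule.span K {x₁, x₂} ∧
    (Submodule.span K {e₁, f₁}).map (quarterTurn hli hsp : L →ₗ[K] L) = Submodule.span K {e₁, f₁} ∧
    (Submodule.span K {e₂, f₂}).map (quarterTurn hli hsp : L →ₗ[K] L) = Submodule.span K {e₂, f₂} := by
  obtain ⟨φx₁, φx₂, φe₁, φf₁, φe₂, φf₂⟩ := quarterTurn_apply hli hsp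
  simp only [Submodule.map_span, Set.image_pair, LinearEquiv.coe_coe, φx₁, φx₂, φe₁, φf₁, φe₂, φf₂,
    true_and, and_true]
  rw [Set.pair_comm, Submodule.span_insert, Submodule.span_insert, ← Set.neg_singleton,
    Submodule.span_neg]

end Sl2Sum

/-- Let `L = sl(2,ℂ) ⊕ sl(2,ℂ)` with standard bases
`{xᵢ, eᵢ, fᵢ}` of the summands, graded by `H = (ℤ/2)²` with
`L₍₀,₀₎ = ⟨x₁,x₂⟩`, `L₍₁,₀₎ = ⟨e₁,f₁⟩`, `L₍₁,₁₎ = ⟨e₂,f₂⟩`, `L₍₀,₁₎ = 0`.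
Let `ε'((0,0),(1,0)) = ε'((1,0),(0,0)) = -1`, `ε' = 1` otherwise, and let `B'` be the
contracted bracket `[x,y]' = ε'(g,h)[x,y]`.  Then `B'` makes `L` into a Lie algebra
isomorphic to `L` via a grading-preserving isomorphism, yet there is no isomorphism
`φ : L → L'` acting as a nonzero scalar on each homogeneous component. -/
theorem sl2_sl2_strong_not_normalized
    {L : Type*} [LieRing L] [LieAlgebra ℂ L]
    (x₁ x₂ e₁ f₁ e₂ f₂ : L)
    (hind : LinearIndependent ℂ ![x₁, x₂, e₁, f₁, e₂, f₂])
    (h1 : ⁅x₁, e₁⁆ = (2 : ℂ) • e₁) (h2 : ⁅x₁, f₁⁆ = (-2 : ℂ) • f₁) (h3 : ⁅e₁, f₁⁆ = x₁)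
    (h4 : ⁅x₂, e₂⁆ = (2 : ℂ) • e₂) (h5 : ⁅x₂, f₂⁆ = (-2 : ℂ) • f₂) (h6 : ⁅e₂, f₂⁆ = x₂)
    (hz1 : ⁅x₁, x₂⁆ = 0) (hz2 : ⁅x₁, e₂⁆ = 0) (hz3 : ⁅x₁, f₂⁆ = 0)
    (hz4 : ⁅e₁, x₂⁆ = 0) (hz5 : ⁅e₁, e₂⁆ = 0) (hz6 : ⁅e₁, f₂⁆ = 0)
    (hz7 : ⁅f₁, x₂⁆ = 0) (hz8 : ⁅f₁, e₂⁆ = 0) (hz9 : ⁅f₁, f₂⁆ = 0)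
    (ℒ : ZMod 2 × ZMod 2 → Submodule ℂ L)
    (hL00 : ℒ (0, 0) = Submodule.span ℂ {x₁, x₂})
    (hL10 : ℒ (1, 0) = Submodule.span ℂ {e₁, f₁})
    (hL11 : ℒ (1, 1) = Submodule.span ℂ {e₂, f₂})
    (hL01 : ℒ (0, 1) = ⊥)
    (hinternal : DirectSum.IsInternal ℒ)
    (ε' : ZMod 2 × ZMod 2 → ZMod 2 × ZMod 2 → ℂ)
    (hε' : ε' = fun g h =>
      if (g = (0, 0) ∧ h = (1, 0)) ∨ (g = (1, 0) ∧ h = (0, 0)) then -1 else 1)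
    (B' : L →ₗ[ℂ] L →ₗ[ℂ] L)
    (hB' : ∀ g h : ZMod 2 × ZMod 2, ∀ x ∈ ℒ g, ∀ y ∈ ℒ h, B' x y = ε' g h • ⁅x, y⁆) :
    (∀ x : L, B' x x = 0) ∧
    (∀ x y z : L, B' x (B' y z) + B' y (B' z x) + B' z (B' x y) = 0) ∧
    (∃ φ : L ≃ₗ[ℂ] L, (∀ x y : L, φ (B' x y) = ⁅φ x, φ y⁆) ∧
      ∀ g : ZMod 2 × ZMod 2, (ℒ g).map (φ : L →ₗ[ℂ] L) = ℒ g) ∧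
    ¬ ∃ φ : L ≃ₗ[ℂ] L, (∀ x y : L, φ ⁅x, y⁆ = B' (φ x) (φ y)) ∧
      ∀ g : ZMod 2 × ZMod 2, ∃ c : ℂ, c ≠ 0 ∧ ∀ x ∈ ℒ g, φ x = c • x := by
  subst hε'
  have hcases (g : ZMod 2 × ZMod 2) : g = (0, 0) ∨ g = (0, 1) ∨ g = (1, 0) ∨ g = (1, 1) := by
    revert g; decide
  have hmem (i : Fin 6) : ![x₁, x₂, e₁, f₁, e₂, f₂] i ∈ ℒ (sl2SumDegree i) := by
    fin_cases i <;> simp [sl2SumDegree, hL00, hL10, hL11, Submodule.mem_span_of_mem]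
  have hsp : ⊤ ≤ Submodule.span ℂ (Set.range ![x₁, x₂, e₁, f₁, e₂, f₂]) := by
    rw [← hinternal.submodule_iSup_eq_top]
    refine iSup_le fun g => ?_
    obtain rfl | rfl | rfl | rfl := hcases g <;>
      simp [hL00, hL01, hL10, hL11, Submodule.span_mono, Set.insert_subset_iff]
  have hrel : IsCommutingSl2Triples ℂ x₁ x₂ e₁ f₁ e₂ f₂ :=
    ⟨h1, h2, h3, h4, h5, h6, hz1, hz2, hz3, hz4, hz5, hz6, hz7, hz8, hz9⟩
  have hφ := hrel.quarterTurn_map_eq_lie hind hsp fun i j => hB' _ _ _ (hmem i) _ (hmem j)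
  have hinj := (quarterTurn hind hsp).injective
  refine ⟨self_eq_zero_of_map_eq_lie hinj hφ, jacobi_of_map_eq_lie hinj hφ,
    ⟨_, hφ, fun g => ?_⟩, ?_⟩
  · obtain ⟨h00, h10, h11⟩ := map_quarterTurn_span hind hsp
    obtain rfl | rfl | rfl | rfl := hcases g <;> simp [hL00, hL01, hL10, hL11, h00, h10, h11]
  · rintro ⟨ρ, hρ, hscal⟩
    choose c hc₀ hc using hscal
    have hc₁ : c (1, 0) = -(c (0, 0) * c (1, 0)) := by
      simpa [sl2SumDegree] using eq_mul_mul_of_map_lie_eq hB' hc hρ (hmem 0) (hmem 2)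
        (h1 ▸ Submodule.smul_mem _ _ (hmem 2)) (h1 ▸ smul_ne_zero two_ne_zero (hind.ne_zero 2))
    have hc₂ : c (1, 1) = c (0, 0) * c (1, 1) := by
      simpa [sl2SumDegree] using eq_mul_mul_of_map_lie_eq hB' hc hρ (hmem 1) (hmem 4)
        (h4 ▸ Submodule.smul_mem _ _ (hmem 4)) (h4 ▸ smul_ne_zero two_ne_zero (hind.ne_zero 4))
    have h00 : c (0, 0) = 1 := mul_right_cancel₀ (hc₀ (1, 1)) (by linear_combination -hc₂)
    exact hc₀ (1, 0) (by linear_combination (hc₁ - c (1, 0) * h00) / 2)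
end

section
/- Let L = so(3,ℂ) with basis x_1, x_2, x_3 and [x_i, x_{i+1}] = x_{i+2} (indices mod 3), graded by H = (Z/2)^2 with L_{(1,0)} = ⟨x_1⟩, L_{(1,1)} = ⟨x_2⟩, L_{(0,1)} = ⟨x_3⟩. Define ε by ε((1,0),(1,1)) = ε((1,1),(1,0)) = 1 and zero otherwise, and ε' by ε'((1,1),(0,1)) = ε'((0,1),(1,1)) = 1 and zero otherwise. Then L^ε and L^{ε'} are isomorphic as Lie algebras (by a grading-permuting isomorphism), but there is no isomorphism preserving each homogeneous component, since the center of L^ε is L_{(0,1)} while the center of L^{ε'} is L_{(1,0)}. -/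
/-
Both contracted brackets are cross products of coordinate projections:
`[x, y]^ε = π₃ x × π₃ y` and `[x, y]^{ε'} = π₁ x × π₁ y`, where `π_k` kills the `x_k`-coordinate.
The cyclic shift `x₁ ↦ x₂ ↦ x₃ ↦ x₁` commutes with the cross product and conjugates `π₃` into
`π₁`, so it is an isomorphism `L^ε ≅ L^{ε'}` permuting the homogeneous components. The centres
are `⟨x₃⟩` and `⟨x₁⟩`; since every isomorphism carries centre onto centre, an isomorphism fixing
each component would identify `⟨x₃⟩ = L₍₀,₁₎` with `⟨x₁⟩ = L₍₁,₀₎`.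
-/

/-- `L = so(3,ℂ)`, modelled as `ℂ³` with the cross product as Lie bracket, so that
the standard basis vectors `x₁ = e₀, x₂ = e₁, x₃ = e₂` satisfy `[xᵢ, xᵢ₊₁] = xᵢ₊₂`. -/
abbrev L3 : Type := Fin 3 → ℂ

/-- The `(ℤ/2)²`-grading with `L₍₁,₀₎ = ⟨x₁⟩`, `L₍₁,₁₎ = ⟨x₂⟩`, `L₍₀,₁₎ = ⟨x₃⟩`. -/
noncomputable def ℒ3 : ZMod 2 × ZMod 2 → Submodule ℂ L3 := fun g =>
  if g = (1, 0) then Submodule.span ℂ {![1, 0, 0]}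
  else if g = (1, 1) then Submodule.span ℂ {![0, 1, 0]}
  else if g = (0, 1) then Submodule.span ℂ {![0, 0, 1]}
  else ⊥

/-- `ε`, supported on `((1,0),(1,1))` and `((1,1),(1,0))` with value `1`. -/
def eps : ZMod 2 × ZMod 2 → ZMod 2 × ZMod 2 → ℂ := fun g h =>
  if (g = (1, 0) ∧ h = (1, 1)) ∨ (g = (1, 1) ∧ h = (1, 0)) then 1 else 0

/-- `ε'`, supported on `((1,1),(0,1))` and `((0,1),(1,1))` with value `1`. -/
def eps' : ZMod 2 × ZMod 2 → ZMod 2 × ZMod 2 → ℂ := fun g h =>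
  if (g = (1, 1) ∧ h = (0, 1)) ∨ (g = (0, 1) ∧ h = (1, 1)) then 1 else 0

lemma LinearMap.setOf_forall_apply_eq_zero_eq_ker {R M N P : Type*} [CommSemiring R]
    [AddCommMonoid M] [AddCommMonoid N] [AddCommMonoid P] [Module R M] [Module R N] [Module R P]
    (B : M →ₗ[R] N →ₗ[R] P) : {x | ∀ y, B x y = 0} = (LinearMap.ker B : Set M) := by
  ext x
  simp [LinearMap.ext_iff]

lemma LinearEquiv.map_ker_eq_ker_of_intertwines {R M N : Type*} [CommSemiring R]
    [AddCommMonoid M] [AddCommMonoid N] [Module R M] [Module R N] (φ : M ≃ₗ[R] N)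
    {B : M →ₗ[R] M →ₗ[R] M} {B' : N →ₗ[R] N →ₗ[R] N}
    (h : ∀ x y, φ (B x y) = B' (φ x) (φ y)) :
    (LinearMap.ker B).map (φ : M →ₗ[R] N) = LinearMap.ker B' := by
  have hker : ∀ x, B' (φ x) = 0 ↔ B x = 0 := fun x => by
    simp only [LinearMap.ext_iff, LinearMap.zero_apply, φ.surjective.forall, ← h,
      LinearEquiv.map_eq_zero_iff]
  ext z
  obtain ⟨x, rfl⟩ := φ.surjective z
  simp [Submodule.mem_map_equiv, hker]

lemma span_single_ne {ι R : Type*} [DecidableEq ι] [Semiring R] [Nontrivial R] {i j : ι}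
    (hij : i ≠ j) : R ∙ (Pi.single i 1 : ι → R) ≠ R ∙ Pi.single j 1 := by
  intro h
  obtain ⟨c, hc⟩ := Submodule.mem_span_singleton.mp (h ▸ Submodule.mem_span_singleton_self _)
  simpa [hij] using congrFun hc i

def deg : Fin 3 → ZMod 2 × ZMod 2 := ![(1, 0), (1, 1), (0, 1)]

lemma ℒ3_deg (i : Fin 3) : ℒ3 (deg i) = ℂ ∙ Pi.single i 1 := by
  fin_cases i <;> simp [ℒ3, deg] <;> congr 2 <;> ext j <;> fin_cases j <;> rfl

lemma ℒ3_eq_bot_or_exists_deg (g : ZMod 2 × ZMod 2) : ℒ3 g = ⊥ ∨ ∃ i, g = deg i := by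
  unfold ℒ3
  split_ifs with h₀ h₁ h₂
  exacts [Or.inr ⟨0, h₀⟩, Or.inr ⟨1, h₁⟩, Or.inr ⟨2, h₂⟩, Or.inl rfl]

def dropCoord (k : Fin 3) : L3 →ₗ[ℂ] L3 :=
  LinearMap.pi fun i => if i = k then 0 else LinearMap.proj i

lemma dropCoord_apply (k : Fin 3) (x : L3) (m : Fin 3) :
    dropCoord k x m = if m = k then 0 else x m := by
  simp only [dropCoord, LinearMap.pi_apply]
  split_ifs <;> rfl

/-- `[·,·]^ε` for the `ε` that switches off exactly the brackets involving `x_{k+1}`. -/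
def crossDrop (k : Fin 3) : L3 →ₗ[ℂ] L3 →ₗ[ℂ] L3 :=
  (crossProduct : L3 →ₗ[ℂ] L3 →ₗ[ℂ] L3).compl₁₂ (dropCoord k) (dropCoord k)

lemma eq_crossDrop_of_graded (k : Fin 3) {ε : ZMod 2 × ZMod 2 → ZMod 2 × ZMod 2 → ℂ}
    (hε : ∀ i j, i ≠ j → ε (deg i) (deg j) = if i ≠ k ∧ j ≠ k then 1 else 0)
    {B : L3 →ₗ[ℂ] L3 →ₗ[ℂ] L3}
    (hB : ∀ g h, ∀ x ∈ ℒ3 g, ∀ y ∈ ℒ3 h, B x y = ε g h • crossProduct x y) :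
    B = crossDrop k := by
  refine LinearMap.ext_basis (Pi.basisFun ℂ (Fin 3)) (Pi.basisFun ℂ (Fin 3)) fun i j => ?_
  have hi : Pi.single i 1 ∈ ℒ3 (deg i) := ℒ3_deg i ▸ Submodule.mem_span_singleton_self _
  have hj : Pi.single j 1 ∈ ℒ3 (deg j) := ℒ3_deg j ▸ Submodule.mem_span_singleton_self _
  simp only [Pi.basisFun_apply]
  rw [hB _ _ _ hi _ hj]
  by_cases hij : i = j
  · subst hij
    simp [crossDrop]
  · rw [hε i j hij]
    fin_cases k <;> fin_cases i <;> fin_cases j <;>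
      simp [crossDrop, dropCoord_apply, cross_apply] at hij ⊢ <;>
      ext m <;> fin_cases m <;> rfl

lemma eps_deg (i j : Fin 3) (hij : i ≠ j) :
    eps (deg i) (deg j) = if i ≠ 2 ∧ j ≠ 2 then 1 else 0 := by
  fin_cases i <;> fin_cases j <;> simp [eps, deg] at hij ⊢

lemma eps'_deg (i j : Fin 3) (hij : i ≠ j) :
    eps' (deg i) (deg j) = if i ≠ 0 ∧ j ≠ 0 then 1 else 0 := by
  fin_cases i <;> fin_cases j <;> simp [eps', deg] at hij ⊢

lemma ker_crossDrop (k : Fin 3) : LinearMap.ker (crossDrop k) = ℂ ∙ Pi.single k 1 := by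
  ext x
  rw [LinearMap.mem_ker, Submodule.mem_span_singleton]
  constructor
  · intro hx
    have h := fun j => LinearMap.congr_fun hx (Pi.single j 1)
    have h₀ := h 0
    have h₁ := h 1
    have h₂ := h 2
    refine ⟨x k, ?_⟩
    fin_cases k <;>
      simp [crossDrop, dropCoord_apply, cross_apply, Matrix.cons_eq_zero_iff] at h₀ h₁ h₂ <;>
      ext m <;> fin_cases m <;> simp [*]
  · rintro ⟨c, rfl⟩
    ext y m
    fin_cases k <;> fin_cases m <;> simp [crossDrop, dropCoord_apply, cross_apply]

noncomputable def cyclicShift : L3 ≃ₗ[ℂ] L3 :=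
  LinearEquiv.funCongrLeft ℂ ℂ (Equiv.subRight 1)

lemma cyclicShift_apply (x : L3) (m : Fin 3) : cyclicShift x m = x (m - 1) := rfl

lemma cyclicShift_single (i : Fin 3) : cyclicShift (Pi.single i 1) = Pi.single (i + 1) 1 := by
  ext m
  simp [cyclicShift_apply, Pi.single_apply, sub_eq_iff_eq_add]

lemma cyclicShift_cross (a b : L3) :
    cyclicShift (crossProduct a b) = crossProduct (cyclicShift a) (cyclicShift b) := by
  ext m
  fin_cases m <;> simp [cyclicShift_apply, cross_apply, show (-1 : Fin 3) = 2 from rfl]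

lemma cyclicShift_dropCoord (k : Fin 3) (x : L3) :
    cyclicShift (dropCoord k x) = dropCoord (k + 1) (cyclicShift x) := by
  ext m
  simp [cyclicShift_apply, dropCoord_apply, sub_eq_iff_eq_add]

lemma cyclicShift_crossDrop (k : Fin 3) (x y : L3) :
    cyclicShift (crossDrop k x y) = crossDrop (k + 1) (cyclicShift x) (cyclicShift y) := by
  simp only [crossDrop, LinearMap.compl₁₂_apply, cyclicShift_cross, cyclicShift_dropCoord]

lemma exists_map_cyclicShift_ℒ3 (g : ZMod 2 × ZMod 2) :
    ∃ g', (ℒ3 g).map (cyclicShift : L3 →ₗ[ℂ] L3) = ℒ3 g' := by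
  obtain hg | ⟨i, rfl⟩ := ℒ3_eq_bot_or_exists_deg g
  · exact ⟨g, by rw [hg, Submodule.map_bot]⟩
  · refine ⟨deg (i + 1), ?_⟩
    rw [ℒ3_deg, ℒ3_deg, Submodule.map_span, Set.image_singleton, LinearEquiv.coe_coe,
      cyclicShift_single]

/-- For the contracted brackets `B = [·,·]^ε` and `B' = [·,·]^{ε'}`
on `so(3,ℂ)`: the Lie algebras `L^ε` and `L^{ε'}` are isomorphic via a
grading-permuting isomorphism, but no isomorphism preserves each homogeneous
component; indeed the center of `L^ε` is `L₍₀,₁₎` while that of `L^{ε'}` is `L₍₁,₀₎`. -/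
theorem so3_equivalent_not_strongly
    (B B' : L3 →ₗ[ℂ] L3 →ₗ[ℂ] L3)
    (hB : ∀ g h : ZMod 2 × ZMod 2, ∀ x ∈ ℒ3 g, ∀ y ∈ ℒ3 h,
      B x y = eps g h • crossProduct x y)
    (hB' : ∀ g h : ZMod 2 × ZMod 2, ∀ x ∈ ℒ3 g, ∀ y ∈ ℒ3 h,
      B' x y = eps' g h • crossProduct x y) :
    (∃ φ : L3 ≃ₗ[ℂ] L3, (∀ x y : L3, φ (B x y) = B' (φ x) (φ y)) ∧
      ∀ g : ZMod 2 × ZMod 2, ∃ g' : ZMod 2 × ZMod 2,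
        (ℒ3 g).map (φ : L3 →ₗ[ℂ] L3) = ℒ3 g') ∧
    (¬ ∃ φ : L3 ≃ₗ[ℂ] L3, (∀ x y : L3, φ (B x y) = B' (φ x) (φ y)) ∧
      ∀ g : ZMod 2 × ZMod 2, (ℒ3 g).map (φ : L3 →ₗ[ℂ] L3) = ℒ3 g) ∧
    {x : L3 | ∀ y : L3, B x y = 0} = (ℒ3 (0, 1) : Set L3) ∧
    {x : L3 | ∀ y : L3, B' x y = 0} = (ℒ3 (1, 0) : Set L3) := by
  obtain rfl : B = crossDrop 2 := eq_crossDrop_of_graded 2 eps_deg hB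
  obtain rfl : B' = crossDrop 0 := eq_crossDrop_of_graded 0 eps'_deg hB'
  have center_eq (k : Fin 3) : {x : L3 | ∀ y, crossDrop k x y = 0} = (ℒ3 (deg k) : Set L3) := by
    rw [LinearMap.setOf_forall_apply_eq_zero_eq_ker, ker_crossDrop, ℒ3_deg]
  refine ⟨⟨cyclicShift, cyclicShift_crossDrop 2, exists_map_cyclicShift_ℒ3⟩, ?_,
    center_eq 2, center_eq 0⟩
  rintro ⟨φ, hφ, hgraded⟩
  have hcenter := φ.map_ker_eq_ker_of_intertwines hφ
  rw [ker_crossDrop, ker_crossDrop, ← ℒ3_deg, hgraded, ℒ3_deg] at hcenter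
  exact span_single_ne (by decide) hcenter
end
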